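/- arXiv:1908.00311 — 2 statements merged into one kernel-verified Lean document; each statement's English description precedes it below -/
import Mathlib

section
/- The following are equivalent: (1) for every integer n ≥ 1 there exists k with T^k(n) = 1; (2) for every integer n ≥ 0 there exists k with T_R^k(n) = 0. -/
/-- The Collatz function. -/
def T (n : ℤ) : ℤ := if n % 2 = 0 then n / 2 else (3 * n + 1) / 2

/-- The refined map `T_R`. -/
def TR (n : ℤ) : ℤ :=
  if n % 4 = 0 then 3 * n / 4
  else if n % 4 = 2 then (n - 2) / 4
  else (3 * n + 1) / 2

/-!
Write `φ v = 3v + 2`. One step of `TR` from `v` is one or two steps of `T` from `φ v`: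
`T (φ v) = φ (TR v)` for odd `v` and `T (T (φ v)) = φ (TR v)` for even `v`, so the `T`-orbit of
`φ v` runs through `φ` of the whole `TR`-orbit of `v`. Since `φ 0 = 2`, and a `T`-orbit that hits `1`
stays in the cycle `1 ↔ 2`, on which `φ` takes no other value, the `TR`-orbit of `v` reaches `0`
exactly when the `T`-orbit of `φ v` reaches `1`. Conversely, `T` halves an even `n ≥ 1` and sends an
odd one to `φ ((n - 1) / 2)`, so by strong induction it suffices that every `φ v` reaches `1`.
-/

theorem exists_iterate_apply_eq_apply_iterate {α β : Type*} {f : α → α} {g : β → β} {φ : β → α}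
    (h : ∀ b, ∃ j, 0 < j ∧ f^[j] (φ b) = φ (g b)) (b : β) (k : ℕ) :
    ∃ m, k ≤ m ∧ f^[m] (φ b) = φ (g^[k] b) := by
  induction k with
  | zero => exact ⟨0, le_rfl, rfl⟩
  | succ k ih =>
    obtain ⟨m, hkm, hm⟩ := ih
    obtain ⟨j, hj, hfj⟩ := h (g^[k] b)
    refine ⟨j + m, by omega, ?_⟩
    rw [Function.iterate_add_apply, hm, hfj, Function.iterate_succ_apply']

lemma T_of_even {n : ℤ} (h : n % 2 = 0) : T n = n / 2 := if_pos h

lemma T_of_odd {n : ℤ} (h : n % 2 = 1) : T n = (3 * n + 1) / 2 := if_neg (by omega)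

lemma TR_of_emod_four_eq_zero {n : ℤ} (h : n % 4 = 0) : TR n = 3 * n / 4 := if_pos h

lemma TR_of_emod_four_eq_two {n : ℤ} (h : n % 4 = 2) : TR n = (n - 2) / 4 := by
  rw [TR, if_neg (by omega), if_pos h]

lemma TR_of_odd {n : ℤ} (h : n % 2 = 1) : TR n = (3 * n + 1) / 2 := by
  rw [TR, if_neg (by omega), if_neg (by omega)]

lemma exists_iterate_T_three_mul_add_two (v : ℤ) :
    ∃ j, 0 < j ∧ T^[j] (3 * v + 2) = 3 * TR v + 2 := by
  rcases Int.emod_two_eq_zero_or_one v with hv | hv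
  · refine ⟨2, two_pos, ?_⟩
    have h₁ : T (3 * v + 2) = (3 * v + 2) / 2 := T_of_even (by omega)
    rw [Function.iterate_succ_apply', Function.iterate_one, h₁]
    rcases (by omega : v % 4 = 0 ∨ v % 4 = 2) with h4 | h4
    · rw [T_of_odd (by omega), TR_of_emod_four_eq_zero h4]
      omega
    · rw [T_of_even (by omega), TR_of_emod_four_eq_two h4]
      omega
  · refine ⟨1, one_pos, ?_⟩
    rw [Function.iterate_one, T_of_odd (by omega), TR_of_odd hv]
    omega

lemma iterate_T_one_eq_one_or_two (j : ℕ) : T^[j] 1 = 1 ∨ T^[j] 1 = 2 := by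
  induction j with
  | zero => exact Or.inl rfl
  | succ j ih =>
    rw [Function.iterate_succ_apply']
    rcases ih with h | h <;> rw [h]
    exacts [Or.inr (by decide), Or.inl (by decide)]

lemma iterate_TR_eq_zero_of_iterate_T_eq_one {v : ℤ} {k : ℕ} (h : T^[k] (3 * v + 2) = 1) :
    TR^[k] v = 0 := by
  obtain ⟨m, hkm, hm⟩ := exists_iterate_apply_eq_apply_iterate
    exists_iterate_T_three_mul_add_two v k
  rw [← Nat.sub_add_cancel hkm, Function.iterate_add_apply, h] at hm
  rcases iterate_T_one_eq_one_or_two (m - k) with h1 | h1 <;> omega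

lemma exists_iterate_T_eq_one_of_iterate_TR_eq_zero {v : ℤ} {k : ℕ} (h : TR^[k] v = 0) :
    ∃ m, T^[m] (3 * v + 2) = 1 := by
  obtain ⟨m, -, hm⟩ := exists_iterate_apply_eq_apply_iterate
    exists_iterate_T_three_mul_add_two v k
  refine ⟨m + 1, ?_⟩
  rw [Function.iterate_succ_apply', hm, h]
  decide

lemma exists_iterate_T_eq_one_of_three_mul_add_two
    (h : ∀ v : ℤ, 0 ≤ v → ∃ m, T^[m] (3 * v + 2) = 1) (n : ℤ) (hn : 1 ≤ n) :
    ∃ k, T^[k] n = 1 := by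
  induction n using Int.strongRec (m := 1) with
  | lt n hn' => omega
  | ge n _ ih =>
    rcases Int.emod_two_eq_zero_or_one n with hev | hodd
    · obtain ⟨k, hk⟩ := ih (n / 2) (by omega) (by omega)
      exact ⟨k + 1, by rw [Function.iterate_succ_apply, T_of_even hev, hk]⟩
    · have hT : T n = 3 * ((n - 1) / 2) + 2 := by rw [T_of_odd hodd]; omega
      obtain ⟨m, hm⟩ := h ((n - 1) / 2) (by omega)
      exact ⟨m + 1, by rw [Function.iterate_succ_apply, hT, hm]⟩

theorem stmt_5 :
    (∀ n : ℤ, 1 ≤ n → ∃ k : ℕ, T^[k] n = 1) ↔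
      (∀ n : ℤ, 0 ≤ n → ∃ k : ℕ, TR^[k] n = 0) := by
  constructor
  · intro hT v hv
    obtain ⟨k, hk⟩ := hT (3 * v + 2) (by omega)
    exact ⟨k, iterate_TR_eq_zero_of_iterate_T_eq_one hk⟩
  · intro hTR
    refine exists_iterate_T_eq_one_of_three_mul_add_two fun v hv => ?_
    obtain ⟨k, hk⟩ := hTR v hv
    exact exists_iterate_T_eq_one_of_iterate_TR_eq_zero hk
end

section
/- For every integer j: T_R(12j) = 9j, T_R^2(48j + 18) = 9j + 3, T_R^3(192j + 138) = 9j + 6, T_R^3(192j + 42) = 3j, T_R^3(96j + 90) = 9j + 8, T_R^2(24j + 6) = 9j + 2, and T_R(6j + 3) = 9j + 5. (This describes how the accelerated refined map carries the seven-piece partition of the congruence class [0]_3 onto congruence classes mod 9 and mod 3.) -/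
lemma TR_four_mul (m : ℤ) : TR (4 * m) = 3 * m := by
  unfold TR; split_ifs <;> omega

lemma TR_four_mul_add_two (m : ℤ) : TR (4 * m + 2) = m := by
  unfold TR; split_ifs <;> omega

lemma TR_two_mul_add_one (m : ℤ) : TR (2 * m + 1) = 3 * m + 2 := by
  unfold TR; split_ifs <;> omega

theorem stmt_10 (j : ℤ) :
    TR (12 * j) = 9 * j ∧
    TR^[2] (48 * j + 18) = 9 * j + 3 ∧
    TR^[3] (192 * j + 138) = 9 * j + 6 ∧
    TR^[3] (192 * j + 42) = 3 * j ∧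
    TR^[3] (96 * j + 90) = 9 * j + 8 ∧
    TR^[2] (24 * j + 6) = 9 * j + 2 ∧
    TR (6 * j + 3) = 9 * j + 5 := by
  simp only [Function.iterate_succ_apply, Function.iterate_zero_apply]
  refine ⟨?_, ?_, ?_, ?_, ?_, ?_, ?_⟩
  · rw [show 12 * j = 4 * (3 * j) by ring, TR_four_mul]; ring
  · rw [show 48 * j + 18 = 4 * (12 * j + 4) + 2 by ring, TR_four_mul_add_two,
      show 12 * j + 4 = 4 * (3 * j + 1) by ring, TR_four_mul]; ring
  · rw [show 192 * j + 138 = 4 * (48 * j + 34) + 2 by ring, TR_four_mul_add_two,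
      show 48 * j + 34 = 4 * (12 * j + 8) + 2 by ring, TR_four_mul_add_two,
      show 12 * j + 8 = 4 * (3 * j + 2) by ring, TR_four_mul]; ring
  · rw [show 192 * j + 42 = 4 * (48 * j + 10) + 2 by ring, TR_four_mul_add_two,
      show 48 * j + 10 = 4 * (12 * j + 2) + 2 by ring, TR_four_mul_add_two,
      show 12 * j + 2 = 4 * (3 * j) + 2 by ring, TR_four_mul_add_two]
  · rw [show 96 * j + 90 = 4 * (24 * j + 22) + 2 by ring, TR_four_mul_add_two,
      show 24 * j + 22 = 4 * (6 * j + 5) + 2 by ring, TR_four_mul_add_two,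
      show 6 * j + 5 = 2 * (3 * j + 2) + 1 by ring, TR_two_mul_add_one]; ring
  · rw [show 24 * j + 6 = 4 * (6 * j + 1) + 2 by ring, TR_four_mul_add_two,
      show 6 * j + 1 = 2 * (3 * j) + 1 by ring, TR_two_mul_add_one]; ring
  · rw [show 6 * j + 3 = 2 * (3 * j + 1) + 1 by ring, TR_two_mul_add_one]; ring
end
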